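/- In the Z_4 toric code, the quotient group H / K has cardinality 4 and every element x of H / K satisfies x + x = 0; the four cosets are represented by (0,0), (1,1), (2,0), (3,1), and the twists of these representatives are θ = 1, i, 1, −i respectively. (Thus condensing e²m² in the Z_4 toric code yields the doubled semion anyons {1, s, ss̄, s̄} with twists θ(1)=1, θ(s)=i, θ(ss̄)=1, θ(s̄)=−i.) -/

import Mathlib

/-- Anyons of the Z_4 toric code: the group G = ZMod 4 × ZMod 4. -/
abbrev Z4Anyon := ZMod 4 × ZMod 4

/-- Topological twist θ(p,q) = i^(p̃·q̃) of the Z_4 toric code. -/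
noncomputable def z4Twist (a : Z4Anyon) : ℂ :=
  Complex.I ^ (a.1.val * a.2.val)

/-- Mutual braiding b((p₁,q₁),(p₂,q₂)) = i^(p̃₁·q̃₂ + p̃₂·q̃₁) of the Z_4 toric code. -/
noncomputable def z4Braiding (a a' : Z4Anyon) : ℂ :=
  Complex.I ^ (a.1.val * a'.2.val + a'.1.val * a.2.val)

/-- K: the subgroup of G generated by the boson e²m² = (2,2). -/
def z4K : AddSubgroup Z4Anyon :=
  AddSubgroup.closure {((2 : ZMod 4), (2 : ZMod 4))}

/-- H: the set of anyons with trivial mutual braiding with (2,2) (deconfined anyons). -/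
noncomputable def z4H : Set Z4Anyon :=
  {a | z4Braiding a (2, 2) = 1}

/-! Since `(2,2)` has order two, `K = {0, (2,2)}`, and since `b(a,(2,2)) = i^(2(p̃+q̃))`, `H` consists
of the eight anyons with `p + q` even. On `H` the parities of `p` and `q` agree, so `2a ∈ {0, (2,2)}`
and every coset of `K` in `H` has order at most two; the remaining claims are finite checks. -/

theorem AddSubgroup.mem_closure_singleton_of_add_self_eq_zero {G : Type*} [AddGroup G] {g x : G}
    (hg : g + g = 0) : x ∈ closure {g} ↔ x = 0 ∨ x = g := by
  have h2 : (2 : ℤ) • g = 0 := by rw [two_zsmul, hg]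
  rw [mem_closure_singleton]
  constructor
  · rintro ⟨n, rfl⟩
    obtain ⟨k, rfl | rfl⟩ := Int.even_or_odd' n
    · left
      rw [mul_comm, mul_zsmul, h2, zsmul_zero]
    · right
      rw [add_zsmul, mul_comm, mul_zsmul, h2, zsmul_zero, zero_add, one_zsmul]
  · rintro (rfl | rfl)
    exacts [⟨0, zero_zsmul _⟩, ⟨1, one_zsmul _⟩]

theorem Complex.I_pow_eq_one_iff {n : ℕ} : I ^ n = 1 ↔ 4 ∣ n := by
  rw [I_pow_eq_pow_mod, Nat.dvd_iff_mod_eq_zero]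
  have : n % 4 < 4 := Nat.mod_lt n (by norm_num)
  interval_cases n % 4 <;> norm_num [Complex.ext_iff]

lemma mem_z4K {x : Z4Anyon} : x ∈ z4K ↔ x = 0 ∨ x = (2, 2) :=
  AddSubgroup.mem_closure_singleton_of_add_self_eq_zero (by decide)

lemma mem_z4H {a : Z4Anyon} : a ∈ z4H ↔ 2 ∣ a.1.val + a.2.val := by
  change Complex.I ^ (a.1.val * 2 + 2 * a.2.val) = 1 ↔ _
  rw [Complex.I_pow_eq_one_iff]
  omega

instance : DecidablePred (· ∈ z4K) := fun _ => decidable_of_iff _ mem_z4K.symm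

instance : DecidablePred (· ∈ z4H) := fun _ => decidable_of_iff _ mem_z4H.symm

lemma add_self_mem_z4K_of_mem_z4H : ∀ a ∈ z4H, a + a ∈ z4K := by decide

lemma image_z4H :
    (QuotientAddGroup.mk '' z4H : Set (Z4Anyon ⧸ z4K)) =
      {QuotientAddGroup.mk ((0 : ZMod 4), (0 : ZMod 4)),
       QuotientAddGroup.mk ((1 : ZMod 4), (1 : ZMod 4)),
       QuotientAddGroup.mk ((2 : ZMod 4), (0 : ZMod 4)),
       QuotientAddGroup.mk ((3 : ZMod 4), (1 : ZMod 4))} := by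
  ext x
  induction x using QuotientAddGroup.induction_on with | H a => ?_
  simp only [Set.mem_image, Set.mem_insert_iff, Set.mem_singleton_iff, QuotientAddGroup.eq]
  revert a
  decide

lemma card_image_z4H : Nat.card (QuotientAddGroup.mk '' z4H : Set (Z4Anyon ⧸ z4K)) = 4 := by
  rw [image_z4H, Nat.card_coe_set_eq, Set.ncard_insert_of_notMem, Set.ncard_insert_of_notMem,
    Set.ncard_pair]
  -- the decidable equality of the quotient does not reduce in the kernel, so compare in `Z4Anyon`
  all_goals simp only [Set.mem_insert_iff, Set.mem_singleton_iff, ne_eq, QuotientAddGroup.eq]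
  all_goals decide

/-- in the Z_4 toric code, the quotient H / K (realized as the
image of H in G / K) has cardinality 4, every element x satisfies x + x = 0,
the four cosets are represented by (0,0), (1,1), (2,0), (3,1), and the twists
of these representatives are 1, i, 1, −i: condensing e²m² yields the doubled
semion anyons {1, s, ss̄, s̄}. -/
theorem z4_condensation_doubled_semion :
    Nat.card ((QuotientAddGroup.mk '' z4H : Set (Z4Anyon ⧸ z4K))) = 4 ∧
    (∀ x ∈ (QuotientAddGroup.mk '' z4H : Set (Z4Anyon ⧸ z4K)), x + x = 0) ∧
    (QuotientAddGroup.mk '' z4H : Set (Z4Anyon ⧸ z4K)) =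
      {QuotientAddGroup.mk ((0 : ZMod 4), (0 : ZMod 4)),
       QuotientAddGroup.mk ((1 : ZMod 4), (1 : ZMod 4)),
       QuotientAddGroup.mk ((2 : ZMod 4), (0 : ZMod 4)),
       QuotientAddGroup.mk ((3 : ZMod 4), (1 : ZMod 4))} ∧
    z4Twist (0, 0) = 1 ∧ z4Twist (1, 1) = Complex.I ∧
    z4Twist (2, 0) = 1 ∧ z4Twist (3, 1) = -Complex.I := by
  refine ⟨card_image_z4H, ?_, image_z4H, pow_zero _, pow_one _, pow_zero _, Complex.I_pow_three⟩
  rintro _ ⟨a, ha, rfl⟩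
  rw [← QuotientAddGroup.mk_add, QuotientAddGroup.eq_zero_iff]
  exact add_self_mem_z4K_of_mem_z4H a ha
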